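/- Let W be a finite set, V = W ⊔ W the disjoint union of two copies of W (elements of the second copy written w̄), and f : V → W the map sending both copies of w to w. Let G be a graph with vertex set V. Define the strong quotient G//f as the graph with vertex set W having an edge between w and w' iff G has an edge between w and w' and also an edge between w̄ and w̄'. Then #Conn(G) ≤ #Conn(G/f) + #Conn(G//f). -/

import Mathlib

/-!
Let `Γ = G.fiberGraph f` be the graph on the components of `G` in which two components are
joined when they meet a common fibre of `f`, i.e. the components of `w` and `w̄`. Walks in `G/f`
lift to walks in `Γ`, so `Γ` has at most `#Conn(G/f)` components. The edge `{[w], [w̄]}` of `Γ`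
does not change along an edge `w w'` of `G//f`, since then `[w] = [w']` and `[w̄] = [w̄']`; hence
`Γ` has at most `#Conn(G//f)` edges. Finally, adding an edge merges at most two components, so a
finite graph has at most as many vertices as components plus edges; apply this to `Γ`.
-/

namespace SimpleGraph

variable {V W : Type*}

theorem Reachable.eq_of_forall_adj {β : Sort*} {G : SimpleGraph V} {f : V → β}
    (hf : ∀ u v, G.Adj u v → f u = f v) {u v : V} (h : G.Reachable u v) : f u = f v := by
  obtain ⟨p⟩ := h
  induction p with
  | nil => rfl
  | cons huv _ ih => exact (hf _ _ huv).trans ih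

theorem card_connectedComponent_bot [Finite V] :
    Nat.card (⊥ : SimpleGraph V).ConnectedComponent = Nat.card V :=
  (Nat.card_eq_of_bijective _ ⟨fun _ _ h => reachable_bot.mp (ConnectedComponent.exact h),
    Quot.mk_surjective⟩).symm

theorem reachable_or_of_reachable_sup_edge {H : SimpleGraph V} {a b u v : V}
    (h : (H ⊔ edge a b).Reachable u v) :
    H.Reachable u v ∨ (H.Reachable u a ∧ H.Reachable b v) ∨
      (H.Reachable u b ∧ H.Reachable a v) := by
  obtain ⟨p⟩ := h
  induction p with
  | nil => exact .inl .rfl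
  | cons hadj _ ih =>
    rcases hadj with hH | hE
    · exact ih.imp (hH.reachable.trans ·) (Or.imp (And.imp_left (hH.reachable.trans ·))
        (And.imp_left (hH.reachable.trans ·)))
    · obtain ⟨⟨rfl, rfl⟩ | ⟨rfl, rfl⟩, -⟩ := (edge_adj ..).mp hE
      · rcases ih with h | ⟨h₁, h₂⟩ | ⟨-, h⟩
        exacts [.inr (.inl ⟨.rfl, h⟩), .inl (h₁.symm.trans h₂), .inl h]
      · rcases ih with h | ⟨-, h⟩ | ⟨h₁, h₂⟩
        exacts [.inr (.inr ⟨.rfl, h⟩), .inl h, .inl (h₁.symm.trans h₂)]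

theorem card_connectedComponent_le_sup_edge_add_one [Finite V] (H : SimpleGraph V) (a b : V) :
    Nat.card H.ConnectedComponent ≤ Nat.card (H ⊔ edge a b).ConnectedComponent + 1 := by
  classical
  -- away from the component of `b`, passing to `H ⊔ edge a b` is injective on components
  let q := ConnectedComponent.map (Hom.ofLE (le_sup_left : H ≤ H ⊔ edge a b))
  refine (Nat.card_le_card_of_injective
    (fun C => if C = H.connectedComponentMk b then none else some (q C)) ?_).trans
    Finite.card_option.le
  refine ConnectedComponent.ind₂ fun u v huv => ?_
  by_cases hu : H.connectedComponentMk u = H.connectedComponentMk b <;>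
    by_cases hv : H.connectedComponentMk v = H.connectedComponentMk b
  · exact hu.trans hv.symm
  all_goals simp only [hu, hv, if_true, if_false, reduceCtorEq, Option.some.injEq] at huv
  simp only [q, ConnectedComponent.map_mk, ConnectedComponent.eq] at huv
  rcases reachable_or_of_reachable_sup_edge huv with h | ⟨-, h⟩ | ⟨h, -⟩
  · exact ConnectedComponent.sound h
  · exact (hv (ConnectedComponent.sound h.symm)).elim
  · exact (hu (ConnectedComponent.sound h)).elim

theorem card_le_card_connectedComponent_add_card_edgeSet [Finite V] (H : SimpleGraph V) :
    Nat.card V ≤ Nat.card H.ConnectedComponent + Nat.card H.edgeSet := by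
  suffices ∀ s : Set (Sym2 V), s.Finite →
      Nat.card V ≤ Nat.card (fromEdgeSet s).ConnectedComponent + s.ncard by
    simpa [Nat.card_coe_set_eq] using this H.edgeSet (Set.toFinite _)
  intro s hs
  induction s, hs using Set.Finite.induction_on with
  | empty => simp [card_connectedComponent_bot]
  | @insert e s he hs ih =>
    induction e using Sym2.ind with | _ a b =>
    have hsup : fromEdgeSet (insert s(a, b) s) = fromEdgeSet s ⊔ edge a b := by
      rw [Set.insert_eq, fromEdgeSet_union, sup_comm, edge]
    rw [hsup, Set.ncard_insert_of_notMem he hs]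
    have hle := card_connectedComponent_le_sup_edge_add_one (fromEdgeSet s) a b
    omega

section Quotient

variable (G : SimpleGraph V) (f : V → W)

def quotient : SimpleGraph W :=
  fromRel fun w w' => ∃ v v', G.Adj v v' ∧ f v = w ∧ f v' = w'

def fiberGraph : SimpleGraph G.ConnectedComponent :=
  fromRel fun C D =>
    ∃ u v, f u = f v ∧ G.connectedComponentMk u = C ∧ G.connectedComponentMk v = D

variable {G f}

theorem reachable_quotient_of_adj {u v : V} (h : G.Adj u v) :
    (G.quotient f).Reachable (f u) (f v) := by
  by_cases huv : f u = f v
  · exact huv ▸ .rfl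
  · exact Adj.reachable ((fromRel_adj ..).mpr ⟨huv, .inl ⟨u, v, h, rfl, rfl⟩⟩)

theorem reachable_fiberGraph_of_eq {u v : V} (h : f u = f v) :
    (G.fiberGraph f).Reachable (G.connectedComponentMk u) (G.connectedComponentMk v) := by
  by_cases huv : G.connectedComponentMk u = G.connectedComponentMk v
  · exact huv ▸ .rfl
  · exact Adj.reachable ((fromRel_adj ..).mpr ⟨huv, .inl ⟨u, v, h, rfl, rfl⟩⟩)

theorem reachable_fiberGraph_of_reachable_quotient {u v : V}
    (h : (G.quotient f).Reachable (f u) (f v)) :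
    (G.fiberGraph f).Reachable (G.connectedComponentMk u) (G.connectedComponentMk v) := by
  obtain ⟨p⟩ := h
  suffices ∀ {w w'} (p : (G.quotient f).Walk w w') (u v : V), f u = w → f v = w' →
      (G.fiberGraph f).Reachable (G.connectedComponentMk u) (G.connectedComponentMk v) from
    this p u v rfl rfl
  intro w w' p
  induction p with
  | nil => exact fun u v hu hv => reachable_fiberGraph_of_eq (hu.trans hv.symm)
  | cons hadj _ ih =>
    intro u v hu hv
    obtain ⟨a, b, hab, ha, hb⟩ := ((fromRel_adj ..).mp hadj).2.elim id
      fun ⟨b, a, hba, hb, ha⟩ => ⟨a, b, hba.symm, ha, hb⟩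
    refine (reachable_fiberGraph_of_eq (hu.trans ha.symm)).trans ?_
    rw [ConnectedComponent.connectedComponentMk_eq_of_adj hab]
    exact ih b v hb hv

theorem card_connectedComponent_fiberGraph_le [Finite W] :
    Nat.card (G.fiberGraph f).ConnectedComponent ≤
      Nat.card (G.quotient f).ConnectedComponent := by
  let φ : G.ConnectedComponent → (G.quotient f).ConnectedComponent :=
    ConnectedComponent.lift (fun v => (G.quotient f).connectedComponentMk (f v)) fun _ _ p _ =>
      p.reachable.eq_of_forall_adj fun _ _ h => ConnectedComponent.sound
        (reachable_quotient_of_adj h)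
  have hφ : ∀ C D, (G.fiberGraph f).Adj C D → φ C = φ D := by
    rintro _ _ ⟨-, ⟨u, v, huv, rfl, rfl⟩ | ⟨u, v, huv, rfl, rfl⟩⟩
    exacts [congrArg (G.quotient f).connectedComponentMk huv,
      congrArg (G.quotient f).connectedComponentMk huv.symm]
  refine Nat.card_le_card_of_injective
    (ConnectedComponent.lift φ fun _ _ p _ => p.reachable.eq_of_forall_adj hφ) ?_
  refine ConnectedComponent.ind₂ fun C D hCD => ?_
  induction C, D using ConnectedComponent.ind₂ with | _ u v =>
  exact ConnectedComponent.sound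
    (reachable_fiberGraph_of_reachable_quotient (ConnectedComponent.exact hCD))

end Quotient

def strongQuotient (G : SimpleGraph (W ⊕ W)) : SimpleGraph W :=
  fromRel fun w w' => G.Adj (.inl w) (.inl w') ∧ G.Adj (.inr w) (.inr w')

theorem card_edgeSet_fiberGraph_le_card_connectedComponent_strongQuotient [Finite W]
    (G : SimpleGraph (W ⊕ W)) :
    Nat.card (G.fiberGraph (Sum.elim id id)).edgeSet ≤
      Nat.card G.strongQuotient.ConnectedComponent := by
  let e (w : W) : Sym2 G.ConnectedComponent :=
    s(G.connectedComponentMk (.inl w), G.connectedComponentMk (.inr w))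
  have he : ∀ w w', G.strongQuotient.Adj w w' → e w = e w' := by
    rintro w w' ⟨-, ⟨hl, hr⟩ | ⟨hl, hr⟩⟩
    · simp only [e, ConnectedComponent.connectedComponentMk_eq_of_adj hl,
        ConnectedComponent.connectedComponentMk_eq_of_adj hr]
    · simp only [e, ConnectedComponent.connectedComponentMk_eq_of_adj hl.symm,
        ConnectedComponent.connectedComponentMk_eq_of_adj hr.symm]
  let g := ConnectedComponent.lift e fun _ _ p _ => p.reachable.eq_of_forall_adj he
  have hg : (G.fiberGraph (Sum.elim id id)).edgeSet ⊆ Set.range g := by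
    refine Sym2.ind fun C D hCD => ?_
    obtain ⟨hne, ⟨u, v, huv, rfl, rfl⟩ | ⟨u, v, huv, rfl, rfl⟩⟩ := hCD
    all_goals
      rcases u with a | a <;> rcases v with b | b <;> obtain rfl : a = b := huv
      all_goals first
        | exact (hne rfl).elim
        | exact ⟨G.strongQuotient.connectedComponentMk a, rfl⟩
        | exact ⟨G.strongQuotient.connectedComponentMk a, Sym2.eq_swap⟩
  calc Nat.card (G.fiberGraph (Sum.elim id id)).edgeSet
      ≤ Nat.card (Set.range g) := Nat.card_mono (Set.toFinite _) hg
    _ ≤ Nat.card G.strongQuotient.ConnectedComponent := Finite.card_range_le g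

end SimpleGraph

/-- Lemma 3.2: for a graph `G` on `V = W ⊔ W` and `f : V → W` the canonical projection,
`#Conn(G) ≤ #Conn(G/f) + #Conn(G//f)`, where the strong quotient `G//f` has an edge between
`w` and `w'` iff `G` has both an edge between `w` and `w'` and one between `w̄` and `w̄'`. -/
theorem components_strong_quotient_bound (W : Type) [Fintype W] (G : SimpleGraph (W ⊕ W)) :
    Nat.card G.ConnectedComponent ≤
      Nat.card (SimpleGraph.fromRel (fun w w' => ∃ v v', G.Adj v v' ∧
          Sum.elim id id v = w ∧ Sum.elim id id v' = w')).ConnectedComponent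
        + Nat.card (SimpleGraph.fromRel (fun w w' =>
            G.Adj (Sum.inl w) (Sum.inl w') ∧ G.Adj (Sum.inr w) (Sum.inr w'))).ConnectedComponent :=
  calc Nat.card G.ConnectedComponent
      ≤ Nat.card (G.fiberGraph (Sum.elim id id)).ConnectedComponent +
          Nat.card (G.fiberGraph (Sum.elim id id)).edgeSet :=
        SimpleGraph.card_le_card_connectedComponent_add_card_edgeSet _
    _ ≤ Nat.card (G.quotient (Sum.elim id id)).ConnectedComponent +
          Nat.card G.strongQuotient.ConnectedComponent :=
        add_le_add SimpleGraph.card_connectedComponent_fiberGraph_le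
          (SimpleGraph.card_edgeSet_fiberGraph_le_card_connectedComponent_strongQuotient G)
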